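/- Let k be an infinite field, n ≥ 1, l ≥ 2, and let I be an ideal of k[X_1,…,X_n] with ⟨X_1,…,X_n⟩^l ⊆ I ⊆ ⟨X_1,…,X_n⟩². Then I is generated by monomials if and only if for every (a_1,…,a_n) ∈ (k^×)^n the k-algebra endomorphism of k[X_1,…,X_n] sending X_i ↦ a_i X_i for every i maps I into I. -/

import Mathlib

/-!
The diagonal torus acts on `k[X_1,…,X_n]` by `a • X^e = (∏ a_i^{e_i}) X^e`, so the coefficient
of `X^e` is scaled by the character `a ↦ a^e`, and distinct monomials give distinct characters
because `k` is infinite. Monomial ideals are therefore torus-stable. Conversely, if `f` lies in a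
torus-stable ideal `I` and `e ≠ e'` are in its support, choose `a` with `a^e ≠ a^{e'}`; then
`a • f - a^{e'} f ∈ I` has smaller support and still contains `e`, so by induction on the size of the
support every term of `f` lies in `I`, i.e. `I` is spanned by the monomials it contains.
-/

open MvPolynomial

/-- A *monomial*: a polynomial of the form `c·X_1^{e_1}⋯X_n^{e_n}` with `c ∈ k` nonzero. -/
def IsMonomialPoly {k : Type*} [Field k] {n : ℕ} (p : MvPolynomial (Fin n) k) : Prop :=
  ∃ (c : k) (e : Fin n →₀ ℕ), c ≠ 0 ∧ p = monomial e c

namespace MvPolynomial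

section CommSemiring

variable {R σ : Type*} [CommSemiring R]

theorem aeval_smul_X_monomial (a : σ → R) (e : σ →₀ ℕ) (c : R) :
    aeval (fun i => a i • X i) (monomial e c) = eval a (monomial e 1) • monomial e c := by
  rw [aeval_monomial, eval_monomial, smul_monomial, one_mul, smul_eq_mul, monomial_eq, C_mul,
    map_finsuppProd, algebraMap_eq]
  simp only [smul_eq_C_mul, mul_pow, Finsupp.prod_mul, map_pow]
  ring

theorem coeff_aeval_smul_X (a : σ → R) (f : MvPolynomial σ R) (e : σ →₀ ℕ) :
    coeff e (aeval (fun i => a i • X i) f) = eval a (monomial e 1) * coeff e f := by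
  classical
  induction f using induction_on' with
  | monomial d c =>
    rw [aeval_smul_X_monomial, coeff_smul, coeff_monomial, smul_eq_mul]
    split_ifs with h
    · rw [h]
    · rw [mul_zero, mul_zero]
  | add p q hp hq => rw [map_add, coeff_add, coeff_add, hp, hq, mul_add]

end CommSemiring

variable {k σ : Type*} [Field k] [Infinite k]

theorem exists_units_eval_monomial_ne {e e' : σ →₀ ℕ} (h : e ≠ e') :
    ∃ a : σ → kˣ, eval (fun i => (a i : k)) (monomial e 1) ≠
      eval (fun i => (a i : k)) (monomial e' 1) := by
  have hne : (monomial e 1 : MvPolynomial σ k) ≠ monomial e' 1 :=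
    (monomial_left_inj one_ne_zero).not.mpr h
  obtain ⟨x, hx, hxe⟩ : ∃ x ∈ Set.pi .univ fun _ => ({0}ᶜ : Set k),
      eval x (monomial e 1) ≠ eval x (monomial e' 1) := by
    by_contra! h'
    exact hne (funext_set _ (fun _ => (Set.finite_singleton 0).infinite_compl) h')
  exact ⟨fun i => Units.mk0 (x i) (hx i trivial), hxe⟩

theorem monomial_coeff_mem_of_forall_aeval_smul_X_mem {I : Ideal (MvPolynomial σ k)}
    (hI : ∀ a : σ → kˣ, ∀ g ∈ I, aeval (fun i => (a i : k) • X i) g ∈ I)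
    {f : MvPolynomial σ k} (hf : f ∈ I) (e : σ →₀ ℕ) : monomial e (coeff e f) ∈ I := by
  induction hN : f.support.card using Nat.strong_induction_on generalizing f with
  | _ N ih =>
  subst hN
  by_cases hsingle : ∀ d ∈ f.support, d = e
  · rwa [← eq_monomial_of_support_subset_singleton hsingle]
  push Not at hsingle
  obtain ⟨e', he', hne⟩ := hsingle
  obtain ⟨a, ha⟩ := exists_units_eval_monomial_ne (k := k) (Ne.symm hne)
  set χ := fun d => eval (fun i => (a i : k)) (monomial d 1)
  set g := aeval (fun i => (a i : k) • X i) f - C (χ e') * f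
  have hg : g ∈ I := sub_mem (hI a f hf) (I.mul_mem_left _ hf)
  have hcoeff (d : σ →₀ ℕ) : coeff d g = (χ d - χ e') * coeff d f := by
    rw [coeff_sub, coeff_aeval_smul_X, coeff_C_mul, sub_mul]
  have hsupp : g.support ⊂ f.support := by
    refine Finset.ssubset_iff_subset_ne.mpr ⟨fun d hd => ?_, fun heq => ?_⟩
    · rw [mem_support_iff, hcoeff] at hd
      rw [mem_support_iff]
      exact right_ne_zero_of_mul hd
    · rw [← heq, mem_support_iff, hcoeff, sub_self, zero_mul] at he'
      exact he' rfl
  have hmem := ih _ (Finset.card_lt_card hsupp) hg rfl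
  rw [hcoeff, ← smul_eq_mul, ← smul_monomial] at hmem
  have hrescaled := I.smul_of_tower_mem (χ e - χ e')⁻¹ hmem
  rwa [smul_smul, inv_mul_cancel₀ (sub_ne_zero.mpr ha), one_smul] at hrescaled

end MvPolynomial

theorem aeval_smul_X_mem_span_of_isMonomialPoly {k : Type*} [Field k] {n : ℕ}
    {S : Set (MvPolynomial (Fin n) k)} (hS : ∀ p ∈ S, IsMonomialPoly p) (a : Fin n → k) :
    Ideal.span S ≤ (Ideal.span S).comap (aeval fun i => a i • X i) := by
  refine Ideal.span_le.mpr fun p hp => ?_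
  obtain ⟨c, e, -, rfl⟩ := hS p hp
  rw [SetLike.mem_coe, Ideal.mem_comap, aeval_smul_X_monomial]
  exact Submodule.smul_of_tower_mem _ _ (Ideal.subset_span hp)

theorem eq_span_isMonomialPoly_of_forall_aeval_smul_X_mem {k : Type*} [Field k] [Infinite k]
    {n : ℕ} {I : Ideal (MvPolynomial (Fin n) k)}
    (hI : ∀ a : Fin n → kˣ, ∀ g ∈ I, aeval (fun i => (a i : k) • X i) g ∈ I) :
    I = Ideal.span {p | IsMonomialPoly p ∧ p ∈ I} := by
  refine le_antisymm (fun f hf => ?_) (Ideal.span_le.mpr fun p hp => hp.2)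
  rw [as_sum f]
  exact Ideal.sum_mem _ fun e he => Ideal.subset_span
    ⟨⟨coeff e f, e, mem_support_iff.mp he, rfl⟩, monomial_coeff_mem_of_forall_aeval_smul_X_mem hI hf e⟩

theorem stmt_14_general (k : Type*) [Field k] [Infinite k] (n : ℕ)
    (I : Ideal (MvPolynomial (Fin n) k)) :
    (∃ S : Set (MvPolynomial (Fin n) k),
        (∀ p ∈ S, IsMonomialPoly p) ∧ I = Ideal.span S) ↔
    (∀ a : Fin n → kˣ, ∀ g ∈ I, aeval (fun i => (a i : k) • X i) g ∈ I) := by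
  constructor
  · rintro ⟨S, hS, rfl⟩ a g hg
    exact aeval_smul_X_mem_span_of_isMonomialPoly hS _ hg
  · intro hI
    exact ⟨_, fun p hp => hp.1, eq_span_isMonomialPoly_of_forall_aeval_smul_X_mem hI⟩

/-- paper's Corollary 5.27. Let `k` be an infinite field, `n ≥ 1`, `l ≥ 2`,
and `I` an ideal with `⟨X_1,…,X_n⟩^l ⊆ I ⊆ ⟨X_1,…,X_n⟩²`.  Then `I` is generated by monomials
if and only if for every `(a_1,…,a_n) ∈ (k^×)^n` the algebra endomorphism `X_i ↦ a_i X_i`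
maps `I` into `I`. -/
theorem stmt_14 (k : Type*) [Field k] [Infinite k] (n l : ℕ) (hn : 1 ≤ n) (hl : 2 ≤ l)
    (I : Ideal (MvPolynomial (Fin n) k))
    (hIl : (Ideal.span (Set.range (X : Fin n → MvPolynomial (Fin n) k))) ^ l ≤ I)
    (hI2 : I ≤ (Ideal.span (Set.range (X : Fin n → MvPolynomial (Fin n) k))) ^ 2) :
    (∃ S : Set (MvPolynomial (Fin n) k),
        (∀ p ∈ S, IsMonomialPoly p) ∧ I = Ideal.span S) ↔
    (∀ a : Fin n → kˣ, ∀ g ∈ I, aeval (fun i => (a i : k) • X i) g ∈ I) :=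
  stmt_14_general k n I
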